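/- Let u := X1X2 + X3 and v := X1² in the universal enveloping algebra of the Engel Lie algebra 𝔤_t. The 4×4 matrix P^{(1)} with rows (1,0,0,0), (0,1,0,0), (−X2, X1, 0, 0), (−u/t, v/t, 0, 0) over U(𝔤_t) (t ≠ 0) is idempotent: P^{(1)} · P^{(1)} = P^{(1)}. -/

import Mathlib

/-- The underlying type of the Engel Lie algebra `𝔤_t`. -/
def EngelAlg (_t : ℝ) : Type := Fin 4 → ℝ

noncomputable instance (t : ℝ) : AddCommGroup (EngelAlg t) :=
  inferInstanceAs (AddCommGroup (Fin 4 → ℝ))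

noncomputable instance (t : ℝ) : Module ℝ (EngelAlg t) :=
  inferInstanceAs (Module ℝ (Fin 4 → ℝ))


@[simp] lemma EngelAlg.add_apply {t : ℝ} (x y : EngelAlg t) (i : Fin 4) :
    (x + y) i = x i + y i := rfl
@[simp] lemma EngelAlg.smul_apply {t : ℝ} (r : ℝ) (x : EngelAlg t) (i : Fin 4) :
    (r • x) i = r * x i := rfl
@[simp] lemma EngelAlg.zero_apply {t : ℝ} (i : Fin 4) : (0 : EngelAlg t) i = 0 := rfl

/-- The Engel bracket: `[X1,X2] = X3`, `[X1,X3] = t·X4`. -/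
def engelBracket (t : ℝ) (x y : Fin 4 → ℝ) : Fin 4 → ℝ := fun i =>
  if i = 2 then x 0 * y 1 - x 1 * y 0
  else if i = 3 then t * (x 0 * y 2 - x 2 * y 0) else 0

noncomputable instance (t : ℝ) : LieRing (EngelAlg t) where
  bracket x y := engelBracket t x y
  add_lie x y z := by
    funext i; show _ = engelBracket t x z i + engelBracket t y z i; fin_cases i <;>
      simp [engelBracket, EngelAlg.add_apply, EngelAlg.zero_apply, Pi.add_apply, Pi.zero_apply] <;> ring
  lie_add x y z := by
    funext i; show _ = engelBracket t x y i + engelBracket t x z i; fin_cases i <;>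
      simp [engelBracket, EngelAlg.add_apply, EngelAlg.zero_apply, Pi.add_apply, Pi.zero_apply] <;> ring
  lie_self x := by
    funext i; fin_cases i <;>
      simp [engelBracket, EngelAlg.zero_apply, Pi.zero_apply, mul_comm, sub_self]
  leibniz_lie x y z := by
    funext i; show _ = engelBracket t (engelBracket t x y) z i + engelBracket t y (engelBracket t x z) i; fin_cases i <;>
      simp [engelBracket, EngelAlg.add_apply, EngelAlg.zero_apply, Pi.add_apply, Pi.zero_apply] <;> ring

noncomputable instance (t : ℝ) : LieAlgebra ℝ (EngelAlg t) where
  lie_smul r x y := by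
    funext i; show _ = r * engelBracket t x y i; fin_cases i <;>
      simp [Bracket.bracket, engelBracket, EngelAlg.smul_apply, EngelAlg.zero_apply, Pi.smul_apply, smul_eq_mul] <;> ring

/-- The canonical basis vectors `X1, X2, X3, X4` (indexed by `Fin 4`). -/
noncomputable def X (t : ℝ) (i : Fin 4) : EngelAlg t := Pi.single i 1


/-- The universal enveloping algebra `U(𝔤_t)`. -/
noncomputable abbrev UEngel (t : ℝ) := UniversalEnvelopingAlgebra ℝ (EngelAlg t)

/-- The images `X1, X2, X3, X4` of the canonical basis in `U(𝔤_t)`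
(indexed by `Fin 4`). -/
noncomputable def XU (t : ℝ) (i : Fin 4) : UEngel t :=
  UniversalEnvelopingAlgebra.ι ℝ (X t i)

open Matrix

/-! `P^{(1)}` has the block form `[[I, 0], [A, 0]]`, and over any ring
`[[I, 0], [A, 0]] * [[I, 0], [A, 0]] = [[I, 0], [A, 0]]`, whatever `A` is. -/

theorem Matrix.isIdempotentElem_of_row_eq_one_of_col_eq_zero {n R : Type*} [Fintype n]
    [DecidableEq n] [NonAssocSemiring R] (P : Matrix n n R) (s : Set n)
    (hrow : ∀ k ∈ s, P k = (1 : Matrix n n R) k) (hcol : ∀ i, ∀ k ∉ s, P i k = 0) :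
    IsIdempotentElem P := by
  suffices P * P = P * 1 by rwa [mul_one] at this
  ext i j
  simp only [mul_apply]
  refine Finset.sum_congr rfl fun k _ => ?_
  by_cases hk : k ∈ s
  · rw [hrow k hk]
  · simp [hcol i k hk]

theorem engel_P1_idempotent_general (t : ℝ) :
    let X1 := XU t 0; let X2 := XU t 1; let X3 := XU t 2
    let u : UEngel t := X1 * X2 + X3
    let v : UEngel t := X1 ^ 2
    let P1 : Matrix (Fin 4) (Fin 4) (UEngel t) :=
      !![1, 0, 0, 0;
         0, 1, 0, 0;
         -X2, X1, 0, 0;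
         -(t⁻¹ • u), t⁻¹ • v, 0, 0]
    P1 * P1 = P1 := by
  intro X1 X2 X3 u v P1
  refine (P1.isIdempotentElem_of_row_eq_one_of_col_eq_zero {0, 1} ?_ ?_).eq
  · rintro k (rfl | rfl) <;> ext j <;> fin_cases j <;> rfl
  · intro i k hk
    fin_cases k <;> fin_cases i <;> first | rfl | simp at hk

/-- With `u = X1X2 + X3`, `v = X1²` in `U(𝔤_t)` (`t ≠ 0`), the matrix `P^{(1)}` with
rows `(1,0,0,0)`, `(0,1,0,0)`, `(−X2, X1, 0, 0)`, `(−u/t, v/t, 0, 0)` is idempotent. -/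
theorem engel_P1_idempotent (t : ℝ) (ht : t ≠ 0) :
    let X1 := XU t 0; let X2 := XU t 1; let X3 := XU t 2
    let u : UEngel t := X1 * X2 + X3
    let v : UEngel t := X1 ^ 2
    let P1 : Matrix (Fin 4) (Fin 4) (UEngel t) :=
      !![1, 0, 0, 0;
         0, 1, 0, 0;
         -X2, X1, 0, 0;
         -(t⁻¹ • u), t⁻¹ • v, 0, 0]
    P1 * P1 = P1 :=
  engel_P1_idempotent_general t
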